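/- arXiv:1603.06491 — 3 statements merged into one kernel-verified Lean document; each statement's English description precedes it below -/
import Mathlib

section
/- Let α > 0, λ > 0, and let ψ(x) = (x+i)^{−α−1}. The wavelet transform of g(x) = e^{2πiλx} with respect to ψ, defined by W_g(a,b) = a^{−1} ∫_ℝ g(t) conj(ψ((t−b)/a)) dt, equals C a^α λ^α e^{2πiλ(b+ai)} for all a > 0 and b ∈ ℝ, where C is a constant independent of a, b, λ. If instead λ ≤ 0 then W_g(a,b) = 0. -/
/-!
Up to its constant, `ψ̂` is `h(ξ) = ξ₊^α e^{-2πξ}`, and `𝓕 h` is computed by an ODE: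
`u(ξ) = ξ h(ξ)` satisfies `u' = (α+1) h - 2π u`, so differentiating `𝓕 h` under the integral and
taking the Fourier transform of `u'` give `(w - i) (𝓕 h)'(w) = -(α+1) (𝓕 h)(w)`. Hence
`𝓕 h = K · conj ψ` with `K = 𝓕 h(0) (-i)^{α+1}`, and `K ≠ 0` because `𝓕 h(0) = Γ(α+1) (2π)^{-α-1}`.
Fourier inversion turns this into `∫ e^{2πiμx} conj ψ(x) dx = K⁻¹ h(μ)`, and the substitution
`t = a x + b` gives `W_g(a, b) = K⁻¹ e^{2πiλb} h(λa)`, which vanishes for `λ ≤ 0`.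
-/

open Complex MeasureTheory Real

/-- The wavelet `ψ(x) = (x+i)^{-α-1}`. -/
noncomputable def psiW (α : ℝ) (x : ℝ) : ℂ := ((x : ℂ) + I) ^ (-(α : ℂ) - 1)

/-- Wavelet transform of `f` with respect to `psiW α`. -/
noncomputable def waveletT (α : ℝ) (f : ℝ → ℂ) (a b : ℝ) : ℂ :=
  (a : ℂ)⁻¹ * ∫ t : ℝ, f t * (starRingEnd ℂ) (psiW α ((t - b) / a))

open ComplexConjugate
open scoped FourierTransform

section Fourier

variable {V E : Type*} [NormedAddCommGroup V] [InnerProductSpace ℝ V] [FiniteDimensional ℝ V]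
  [MeasurableSpace V] [BorelSpace V] [NormedAddCommGroup E] [NormedSpace ℂ E]

theorem Real.fourier_const_mul (c : ℂ) (f : V → ℂ) (w : V) :
    𝓕 (fun x => c * f x) w = c * 𝓕 f w := by
  simp only [Real.fourier_eq, ← smul_eq_mul (a := c), smul_comm _ c, integral_smul]

theorem Real.fourier_sub {f g : V → E} (hf : Integrable f) (hg : Integrable g) (w : V) :
    𝓕 (fun x => f x - g x) w = 𝓕 f w - 𝓕 g w := by
  simp only [Real.fourier_eq, smul_sub]
  exact integral_sub ((Real.fourierIntegral_convergent_iff w).2 hf)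
    ((Real.fourierIntegral_convergent_iff w).2 hg)

end Fourier

theorem hasDerivAt_sub_smul_of_continuousAt {𝕜 F : Type*} [NontriviallyNormedField 𝕜]
    [NormedAddCommGroup F] [NormedSpace 𝕜 F] {g : 𝕜 → F} {a : 𝕜} (hg : ContinuousAt g a) :
    HasDerivAt (fun x => (x - a) • g x) (g a) a := by
  rw [hasDerivAt_iff_tendsto_slope]
  refine (hg.tendsto.mono_left nhdsWithin_le_nhds).congr' ?_
  filter_upwards [self_mem_nhdsWithin] with x hx
  rw [slope_def_module, sub_self, zero_smul, sub_zero, smul_smul,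
    inv_mul_cancel₀ (sub_ne_zero.2 hx), one_smul]

theorem integral_comp_sub_div {F : Type*} [NormedAddCommGroup F] [NormedSpace ℝ F]
    (Φ : ℝ → F) (a b : ℝ) : ∫ t, Φ ((t - b) / a) = |a| • ∫ x, Φ x := by
  rw [integral_sub_right_eq_self (fun t => Φ (t / a)), Measure.integral_comp_div]

theorem eq_mul_sub_cpow_neg_of_hasDerivAt {F F' : ℝ → ℂ} {c s : ℂ} (hc : c.im ≠ 0)
    (hF : ∀ w, HasDerivAt F (F' w) w) (hODE : ∀ w : ℝ, F' w * (w - c) = -s * F w) (w : ℝ) :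
    F w = F 0 * (-c) ^ s * ((w : ℂ) - c) ^ (-s) := by
  have hslit (x : ℝ) : (x : ℂ) - c ∈ slitPlane := by simp [mem_slitPlane_iff, hc]
  have hne (x : ℝ) : (x : ℂ) - c ≠ 0 := slitPlane_ne_zero (hslit x)
  have hderiv (x : ℝ) : HasDerivAt (fun x : ℝ => F x * ((x : ℂ) - c) ^ s) 0 x := by
    have hpow : HasDerivAt (fun x : ℝ => ((x : ℂ) - c) ^ s) (s * ((x : ℂ) - c) ^ (s - 1)) x := by
      simpa using ((hasDerivAt_id (x : ℂ)).sub_const c).cpow_const (hslit x) |>.comp_ofReal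
    refine ((hF x).mul hpow).congr_deriv ?_
    have hsplit : ((x : ℂ) - c) ^ s = ((x : ℂ) - c) ^ (s - 1) * ((x : ℂ) - c) := by
      rw [cpow_sub _ _ (hne x), cpow_one, div_mul_cancel₀ _ (hne x)]
    rw [hsplit]
    linear_combination ((x : ℂ) - c) ^ (s - 1) * hODE x
  have hconst : F w * ((w : ℂ) - c) ^ s = F 0 * (-c) ^ s := by
    simpa using is_const_of_deriv_eq_zero (fun x => (hderiv x).differentiableAt)
      (fun x => (hderiv x).deriv) w 0
  rw [← hconst, cpow_neg, mul_assoc, mul_inv_cancel₀ (cpow_ne_zero_iff.2 (Or.inl (hne w))), mul_one]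

-- `ψ̂` without its constant; `max ξ 0 ^ α = 0` for `ξ ≤ 0` needs `α ≠ 0`, as `0 ^ 0 = 1`.
noncomputable def psiHat (α ξ : ℝ) : ℂ := ((max ξ 0 ^ α * Real.exp (-(2 * π * ξ)) : ℝ) : ℂ)

section psiHat

variable {α : ℝ}

theorem psiHat_of_pos {ξ : ℝ} (hξ : 0 < ξ) :
    psiHat α ξ = ((ξ ^ α * Real.exp (-(2 * π * ξ)) : ℝ) : ℂ) := by
  rw [psiHat, max_eq_left hξ.le]

theorem psiHat_of_nonpos (hα : α ≠ 0) {ξ : ℝ} (hξ : ξ ≤ 0) : psiHat α ξ = 0 := by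
  rw [psiHat, max_eq_right hξ, Real.zero_rpow hα, zero_mul, ofReal_zero]

theorem continuous_psiHat (hα : 0 ≤ α) : Continuous (psiHat α) := by
  have := Real.continuous_rpow_const hα
  unfold psiHat
  fun_prop

theorem integrable_pow_mul_psiHat (hα : 0 < α) (n : ℕ) :
    Integrable fun ξ : ℝ => (ξ : ℂ) ^ n * psiHat α ξ := by
  have hsupp : Function.support (fun ξ : ℝ => (ξ : ℂ) ^ n * psiHat α ξ) ⊆ Set.Ioi 0 :=
    Function.support_subset_iff'.2 fun ξ hξ => by
      rw [psiHat_of_nonpos hα.ne' (not_lt.1 hξ), mul_zero]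
  rw [← integrableOn_iff_integrable_of_support_subset hsupp]
  have hGamma : IntegrableOn
      (fun ξ : ℝ => ((ξ ^ (α + n) * Real.exp (-(2 * π) * ξ ^ (1 : ℝ)) : ℝ) : ℂ)) (Set.Ioi 0) :=
    (integrableOn_rpow_mul_exp_neg_mul_rpow (by linarith [n.cast_nonneg (α := ℝ)]) one_pos
      (by positivity)).ofReal
  refine hGamma.congr_fun (fun ξ hξ => ?_) measurableSet_Ioi
  dsimp only
  rw [psiHat_of_pos hξ, Real.rpow_add hξ, Real.rpow_natCast, Real.rpow_one, neg_mul]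
  push_cast
  ring

theorem integrable_psiHat (hα : 0 < α) : Integrable (psiHat α) := by
  simpa using integrable_pow_mul_psiHat hα 0

theorem hasDerivAt_mul_psiHat_of_pos {ξ : ℝ} (hξ : 0 < ξ) :
    HasDerivAt (fun x : ℝ => (x : ℂ) * psiHat α x)
      ((α + 1) * psiHat α ξ - 2 * π * (ξ * psiHat α ξ)) ξ := by
  have hpow := Real.hasDerivAt_rpow_const (p := α + 1) (Or.inl hξ.ne')
  have hexp : HasDerivAt (fun x => Real.exp (-(2 * π * x)))
      (Real.exp (-(2 * π * ξ)) * -(2 * π)) ξ := by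
    simpa using ((hasDerivAt_id ξ).const_mul (2 * π)).neg.exp
  have heq : (fun x : ℝ => (x : ℂ) * psiHat α x) =ᶠ[nhds ξ]
      fun x => ((x ^ (α + 1) * Real.exp (-(2 * π * x)) : ℝ) : ℂ) := by
    filter_upwards [Ioi_mem_nhds hξ] with x hx
    rw [psiHat_of_pos hx, Real.rpow_add_one hx.ne']
    push_cast
    ring
  refine ((hpow.mul hexp).ofReal_comp.congr_of_eventuallyEq heq).congr_deriv ?_
  rw [psiHat_of_pos hξ, add_sub_cancel_right, Real.rpow_add_one hξ.ne']
  push_cast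
  ring

theorem hasDerivAt_mul_psiHat (hα : 0 < α) (ξ : ℝ) :
    HasDerivAt (fun x : ℝ => (x : ℂ) * psiHat α x)
      ((α + 1) * psiHat α ξ - 2 * π * (ξ * psiHat α ξ)) ξ := by
  rcases lt_trichotomy ξ 0 with hξ | rfl | hξ
  · have heq : (fun x : ℝ => (x : ℂ) * psiHat α x) =ᶠ[nhds ξ] fun _ => 0 := by
      filter_upwards [Iio_mem_nhds hξ] with x hx
      rw [psiHat_of_nonpos hα.ne' hx.le, mul_zero]
    rw [psiHat_of_nonpos hα.ne' hξ.le]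
    simpa using (hasDerivAt_const ξ (0 : ℂ)).congr_of_eventuallyEq heq
  · have h := hasDerivAt_sub_smul_of_continuousAt (continuous_psiHat hα.le).continuousAt (a := 0)
    simp only [sub_zero, real_smul] at h
    simpa [psiHat_of_nonpos hα.ne' le_rfl] using h
  · exact hasDerivAt_mul_psiHat_of_pos hξ

end psiHat

theorem conj_psiW (α x : ℝ) : conj (psiW α x) = ((x : ℂ) - I) ^ (-(α : ℂ) - 1) := by
  have harg : ((x : ℂ) + I).arg ≠ π := by simp [arg_eq_pi_iff]
  rw [psiW, ← conj_conj (-(α : ℂ) - 1), ← conj_cpow _ _ harg]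
  simp [sub_eq_add_neg]

theorem integrable_psiW {α : ℝ} (hα : 0 < α) : Integrable (psiW α) := by
  have hnorm (w : ℝ) : ‖psiW α w‖ = (1 + ‖w‖ ^ 2) ^ (-(α + 1) / 2) := by
    have hexp : -(α : ℂ) - 1 = ((-α - 1 : ℝ) : ℂ) := by push_cast; rfl
    have hI : (w : ℂ) + I = w + (1 : ℝ) * I := by simp
    rw [psiW, hexp, norm_cpow_real, hI, norm_add_mul_I, Real.sqrt_eq_rpow,
      ← Real.rpow_mul (by positivity), Real.norm_eq_abs, sq_abs]
    ring_nf
  exact (integrable_rpow_neg_one_add_norm_sq (E := ℝ) (μ := volume) (r := α + 1)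
    (by simpa using hα)).mono' ((measurable_ofReal.add_const I).pow_const _).aestronglyMeasurable
    (Filter.Eventually.of_forall fun w => (hnorm w).le)

section FourierPsiHat

variable {α : ℝ}

theorem hasDerivAt_fourier_psiHat (hα : 0 < α) (w : ℝ) :
    HasDerivAt (𝓕 (psiHat α)) (-(2 * π * I) * 𝓕 (fun x : ℝ => (x : ℂ) * psiHat α x) w) w := by
  have hint : Integrable fun x : ℝ => x • psiHat α x := by
    simpa [real_smul] using integrable_pow_mul_psiHat hα 1
  refine (Real.hasDerivAt_fourier (integrable_psiHat hα) hint w).congr_deriv ?_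
  rw [← Real.fourier_const_mul]
  exact congrArg (fun f : ℝ → ℂ => 𝓕 f w) <| funext fun x => by simp only [smul_eq_mul]; ring

theorem fourier_mul_psiHat (hα : 0 < α) (w : ℝ) :
    2 * π * I * (w - I) * 𝓕 (fun x : ℝ => (x : ℂ) * psiHat α x) w = (α + 1) * 𝓕 (psiHat α) w := by
  have hu := hasDerivAt_mul_psiHat hα
  have hderiv : deriv (fun x : ℝ => (x : ℂ) * psiHat α x) =
      fun ξ => (α + 1) * psiHat α ξ - 2 * π * (ξ * psiHat α ξ) :=
    funext fun ξ => (hu ξ).deriv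
  have hint : Integrable fun x : ℝ => (x : ℂ) * psiHat α x := by
    simpa using integrable_pow_mul_psiHat hα 1
  have h := congrFun (Real.fourier_deriv hint (fun x => (hu x).differentiableAt)
    (hderiv ▸ ((integrable_psiHat hα).const_mul _).sub (hint.const_mul _))) w
  rw [hderiv, Real.fourier_sub ((integrable_psiHat hα).const_mul _) (hint.const_mul _), smul_eq_mul,
    Real.fourier_const_mul, Real.fourier_const_mul] at h
  linear_combination -h - (2 * π * 𝓕 (fun x : ℝ => (x : ℂ) * psiHat α x) w) * I_sq

theorem fourier_psiHat (hα : 0 < α) (w : ℝ) :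
    𝓕 (psiHat α) w = 𝓕 (psiHat α) 0 * (-I) ^ ((α : ℂ) + 1) * conj (psiW α w) := by
  rw [conj_psiW, ← neg_add']
  exact eq_mul_sub_cpow_neg_of_hasDerivAt (by simp) (hasDerivAt_fourier_psiHat hα)
    (fun x => by linear_combination -fourier_mul_psiHat hα x) w

theorem fourier_psiHat_zero (hα : 0 < α) :
    𝓕 (psiHat α) 0 = (1 / (2 * π)) ^ ((α : ℂ) + 1) * Gamma ((α : ℂ) + 1) := by
  have hsupp (ξ : ℝ) (hξ : ξ ∉ Set.Ioi 0) : psiHat α ξ = 0 :=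
    psiHat_of_nonpos hα.ne' (not_lt.1 hξ)
  rw [Real.fourier_eq']
  simp only [inner_zero_right, mul_zero, ofReal_zero, zero_mul, Complex.exp_zero, one_smul]
  have hGamma := integral_cpow_mul_exp_neg_mul_Ioi (a := α + 1) (by simp; positivity) two_pi_pos
  push_cast at hGamma
  rw [← setIntegral_eq_integral_of_forall_compl_eq_zero hsupp, ← hGamma]
  refine setIntegral_congr_fun measurableSet_Ioi fun ξ hξ => ?_
  rw [psiHat_of_pos hξ, add_sub_cancel_right, ofReal_mul, ofReal_cpow (le_of_lt hξ), ofReal_exp]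
  push_cast
  ring

theorem integrable_fourier_psiHat (hα : 0 < α) : Integrable (𝓕 (psiHat α)) := by
  rw [funext (fourier_psiHat hα)]
  exact (conjCLE.toContinuousLinearMap.integrable_comp (integrable_psiW hα)).const_mul _

theorem integral_exp_mul_conj_psiW (hα : 0 < α) (μ : ℝ) :
    ∫ x : ℝ, cexp (2 * π * I * μ * x) * conj (psiW α x) =
      (𝓕 (psiHat α) 0 * (-I) ^ ((α : ℂ) + 1))⁻¹ * psiHat α μ := by
  have hK : 𝓕 (psiHat α) 0 * (-I) ^ ((α : ℂ) + 1) ≠ 0 := by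
    refine mul_ne_zero ?_ (cpow_ne_zero_iff.2 (Or.inl (neg_ne_zero.2 I_ne_zero)))
    rw [fourier_psiHat_zero hα]
    exact mul_ne_zero (cpow_ne_zero_iff.2 (Or.inl (by simp [pi_ne_zero])))
      (Gamma_ne_zero_of_re_pos (by simp; positivity))
  have hinv := (integrable_psiHat hα).fourierInv_fourier_eq (integrable_fourier_psiHat hα)
    (continuous_psiHat hα.le).continuousAt (v := μ)
  rw [Real.fourierInv_eq', funext (fourier_psiHat hα)] at hinv
  simp only [smul_eq_mul] at hinv
  rw [eq_inv_mul_iff_mul_eq₀ hK, ← hinv, ← integral_const_mul]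
  refine integral_congr_ae (Filter.Eventually.of_forall fun x => ?_)
  simp only [RCLike.inner_apply, conj_trivial]
  push_cast
  rw [show (2 * π * (μ * x) * I : ℂ) = 2 * π * I * μ * x by ring]
  ring

end FourierPsiHat

theorem waveletT_exp {α : ℝ} (hα : 0 < α) (lam : ℝ) {a : ℝ} (ha : 0 < a) (b : ℝ) :
    waveletT α (fun x => cexp (2 * π * I * lam * x)) a b =
      (𝓕 (psiHat α) 0 * (-I) ^ ((α : ℂ) + 1))⁻¹ * cexp (2 * π * I * lam * b) *
        psiHat α (lam * a) := by
  have ha' : (a : ℂ) ≠ 0 := ofReal_ne_zero.2 ha.ne'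
  have hrescale (t : ℝ) : cexp (2 * π * I * lam * t) * conj (psiW α ((t - b) / a)) =
      cexp (2 * π * I * lam * b) *
        (cexp (2 * π * I * ↑(lam * a) * ↑((t - b) / a)) * conj (psiW α ((t - b) / a))) := by
    rw [← mul_assoc, ← Complex.exp_add]
    congr 2
    push_cast
    field_simp
    ring
  rw [waveletT, funext hrescale, integral_comp_sub_div (fun x : ℝ => cexp (2 * π * I * lam * b) *
      (cexp (2 * π * I * ↑(lam * a) * x) * conj (psiW α x))) a b, abs_of_pos ha,
    integral_const_mul, integral_exp_mul_conj_psiW hα, real_smul]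
  field_simp

theorem stmt3 (α : ℝ) (hα : 0 < α) :
    (∃ C : ℂ, ∀ lam : ℝ, 0 < lam → ∀ a : ℝ, 0 < a → ∀ b : ℝ,
      waveletT α (fun x => Complex.exp (2 * π * I * lam * x)) a b =
        C * (a : ℂ) ^ (α : ℂ) * (lam : ℂ) ^ (α : ℂ)
          * Complex.exp (2 * π * I * lam * ((b : ℂ) + a * I))) ∧
    (∀ lam : ℝ, lam ≤ 0 → ∀ a : ℝ, 0 < a → ∀ b : ℝ,
      waveletT α (fun x => Complex.exp (2 * π * I * lam * x)) a b = 0) := by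
  refine ⟨⟨(𝓕 (psiHat α) 0 * (-I) ^ ((α : ℂ) + 1))⁻¹, fun lam hlam a ha b => ?_⟩,
    fun lam hlam a ha b => ?_⟩
  · have hexp : cexp (2 * π * I * lam * (b + a * I)) =
        cexp (2 * π * I * lam * b) * cexp (-(2 * π * (lam * a))) := by
      rw [← Complex.exp_add]
      congr 1
      linear_combination (2 * π * lam * a) * I_sq
    rw [waveletT_exp hα lam ha b, psiHat_of_pos (mul_pos hlam ha), hexp,
      Real.mul_rpow hlam.le ha.le, ofReal_mul, ofReal_mul, ofReal_cpow hlam.le, ofReal_cpow ha.le]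
    push_cast
    ring
  · rw [waveletT_exp hα lam ha b,
      psiHat_of_nonpos hα.ne' (mul_nonpos_of_nonpos_of_nonneg hlam ha.le), mul_zero]
end

section
/- (Wavelet regularity, direct direction) Let 0 < β < α, let f: ℝ → ℂ be bounded and continuous, and let ψ: ℝ → ℂ satisfy |ψ(x)| ≤ C(1+|x|)^{−α−1} and ∫_ℝ x^k ψ(x) dx = 0 for all integers 0 ≤ k < α. If f ∈ C^β(x₀), i.e., there is a polynomial P of degree < β with |f(x) − P(x−x₀)| ≪ |x−x₀|^β globally, then the wavelet transform W(a,b) = a^{−1} ∫_ℝ f(t) conj(ψ((t−b)/a)) dt satisfies W(a,b) ≪ a^β + |b−x₀|^β as (a,b) → (0⁺, x₀). -/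
/-!
After the substitution `t = a x + b` the wavelet coefficient becomes `∫ f(a x + b) conj ψ(x) dx`.
Since `ψ` has vanishing moments below `α`, one may subtract from `f(a x + b)` the polynomial
`x ↦ P(a x + b - x₀)` of degree `< β < α`; the Hölder bound then gives
`|f(a x + b) - P(a x + b - x₀)| ≤ C (a |x| + |b - x₀|)^β ≲ a^β |x|^β + |b - x₀|^β`,
and the decay `|ψ(x)| ≲ (1 + |x|)^(-α-1)` makes both terms integrable against `ψ`
because `β < α`.
-/

open Complex MeasureTheory Real Polynomial

lemma rpow_add_le_two_rpow_mul_rpow_add_rpow {β u v : ℝ} (hβ : 0 ≤ β) (hu : 0 ≤ u)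
    (hv : 0 ≤ v) : (u + v) ^ β ≤ 2 ^ β * (u ^ β + v ^ β) := by
  have hmax : max u v ^ β ≤ u ^ β + v ^ β := by
    rcases max_cases u v with ⟨h, -⟩ | ⟨h, -⟩ <;> rw [h] <;>
      linarith [rpow_nonneg hu β, rpow_nonneg hv β]
  calc (u + v) ^ β ≤ (2 * max u v) ^ β := by
        gcongr; linarith [le_max_left u v, le_max_right u v]
    _ = 2 ^ β * max u v ^ β := mul_rpow zero_le_two (hu.trans (le_max_left u v))
    _ ≤ 2 ^ β * (u ^ β + v ^ β) := by gcongr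

lemma integrable_abs_rpow_mul_one_add_abs_rpow {s r : ℝ} (hs : 0 ≤ s) (hr : s + 1 < r) :
    Integrable fun x : ℝ => |x| ^ s * (1 + |x|) ^ (-r) := by
  have hdom : Integrable fun x : ℝ => (1 + ‖x‖) ^ (-(r - s)) :=
    integrable_one_add_norm (by simp only [Module.finrank_self, Nat.cast_one]; linarith)
  refine hdom.mono' (by fun_prop) (ae_of_all _ fun x => ?_)
  have hx : 0 < 1 + |x| := by positivity
  rw [norm_of_nonneg (by positivity), norm_eq_abs, neg_sub, sub_eq_add_neg, rpow_add hx]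
  gcongr
  linarith

lemma natDegree_lt_of_coeff_eq_zero {R : Type*} [Semiring R] {P : R[X]} {β : ℝ} (hβ : 0 < β)
    (hP : ∀ k : ℕ, β ≤ k → P.coeff k = 0) : (P.natDegree : ℝ) < β := by
  by_contra! h
  have hlead : P.leadingCoeff = 0 := hP _ h
  rw [leadingCoeff_eq_zero.1 hlead, natDegree_zero, Nat.cast_zero] at h
  linarith

lemma natDegree_comp_C_mul_X_add_C_le {R : Type*} [Semiring R] (P : R[X]) (a b : R) :
    (P.comp (C a * X + C b)).natDegree ≤ P.natDegree :=
  natDegree_comp_le.trans ((Nat.mul_le_mul_left _ natDegree_linear_le).trans_eq (mul_one _))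

lemma integral_comp_sub_div_eq_integral_comp_mul_add {a : ℝ} (ha : 0 < a) (b : ℝ)
    (f φ : ℝ → ℂ) :
    (a : ℂ)⁻¹ * ∫ t, f t * φ ((t - b) / a) = ∫ x, f (a * x + b) * φ x := by
  set G : ℝ → ℂ := fun t => f t * φ ((t - b) / a)
  have hG : ∀ x, G (a * x + b) = f (a * x + b) * φ x := fun x => by
    simp only [G, add_sub_cancel_right, mul_div_cancel_left₀ x ha.ne']
  calc (a : ℂ)⁻¹ * ∫ t, G t = |a⁻¹| • ∫ y, G (y + b) := by
        rw [integral_add_right_eq_self, abs_of_pos (inv_pos.2 ha), Complex.real_smul,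
          ofReal_inv]
    _ = ∫ x, G (a * x + b) := (Measure.integral_comp_mul_left (fun y => G (y + b)) a).symm
    _ = ∫ x, f (a * x + b) * φ x := by simp only [hG]

lemma norm_sub_eval_comp_affine_le {f : ℝ → ℂ} {P : ℂ[X]} {x₀ β K : ℝ} (hβ : 0 ≤ β)
    (hK : 0 ≤ K)
    (hfP : ∀ x : ℝ, ‖f x - P.eval ((x - x₀ : ℝ) : ℂ)‖ ≤ K * |x - x₀| ^ β)
    {a : ℝ} (ha : 0 ≤ a) (b x : ℝ) :
    ‖f (a * x + b) - (P.comp (C (a : ℂ) * X + C ((b - x₀ : ℝ) : ℂ))).eval (x : ℂ)‖ ≤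
      K * 2 ^ β * a ^ β * |x| ^ β + K * 2 ^ β * |b - x₀| ^ β := by
  have hPx : (P.comp (C (a : ℂ) * X + C ((b - x₀ : ℝ) : ℂ))).eval (x : ℂ) =
      P.eval ((a * x + b - x₀ : ℝ) : ℂ) := by
    simp only [eval_comp, eval_add, eval_mul, eval_C, eval_X]
    push_cast
    ring_nf
  have hdist : |a * x + b - x₀| ≤ a * |x| + |b - x₀| := by
    simpa only [abs_mul, abs_of_nonneg ha, add_sub_assoc] using abs_add_le (a * x) (b - x₀)
  calc _ ≤ K * |a * x + b - x₀| ^ β := by rw [hPx]; exact hfP _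
    _ ≤ K * (2 ^ β * ((a * |x|) ^ β + |b - x₀| ^ β)) := by
        gcongr
        exact (rpow_le_rpow (abs_nonneg _) hdist hβ).trans
          (rpow_add_le_two_rpow_mul_rpow_add_rpow hβ (by positivity) (abs_nonneg _))
    _ = K * 2 ^ β * a ^ β * |x| ^ β + K * 2 ^ β * |b - x₀| ^ β := by
        rw [mul_rpow ha (abs_nonneg x)]; ring

section VanishingMoments

variable {φ : ℝ → ℂ} {α C : ℝ}

lemma integrable_pow_mul_of_norm_le (hφm : AEStronglyMeasurable φ)
    (hφ : ∀ x, ‖φ x‖ ≤ C * (1 + |x|) ^ (-α - 1)) {k : ℕ} (hk : (k : ℝ) < α) :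
    Integrable fun x : ℝ => (x : ℂ) ^ k * φ x := by
  have hdom := (integrable_abs_rpow_mul_one_add_abs_rpow (Nat.cast_nonneg k)
    (show (k : ℝ) + 1 < α + 1 by linarith)).const_mul C
  refine hdom.mono' (by fun_prop) (ae_of_all _ fun x => ?_)
  rw [norm_mul, norm_pow, norm_real, norm_eq_abs, rpow_natCast, neg_add']
  calc |x| ^ k * ‖φ x‖ ≤ |x| ^ k * (C * (1 + |x|) ^ (-α - 1)) := by gcongr; exact hφ x
    _ = C * (|x| ^ k * (1 + |x|) ^ (-α - 1)) := by ring

lemma integrable_eval_mul_of_norm_le (hφm : AEStronglyMeasurable φ)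
    (hφ : ∀ x, ‖φ x‖ ≤ C * (1 + |x|) ^ (-α - 1)) (Q : ℂ[X])
    (hQ : (Q.natDegree : ℝ) < α) :
    Integrable fun x : ℝ => Q.eval (x : ℂ) * φ x := by
  simp only [eval_eq_sum_range, Finset.sum_mul, mul_assoc]
  refine integrable_finsetSum _ fun k hk => (integrable_pow_mul_of_norm_le hφm hφ ?_).const_mul _
  have : k ≤ Q.natDegree := Nat.lt_succ_iff.1 (Finset.mem_range.1 hk)
  exact lt_of_le_of_lt (by exact_mod_cast this) hQ

lemma integral_eval_mul_eq_zero (hφm : AEStronglyMeasurable φ)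
    (hφ : ∀ x, ‖φ x‖ ≤ C * (1 + |x|) ^ (-α - 1))
    (hmom : ∀ k : ℕ, (k : ℝ) < α → ∫ x : ℝ, (x : ℂ) ^ k * φ x = 0)
    (Q : ℂ[X]) (hQ : (Q.natDegree : ℝ) < α) :
    ∫ x : ℝ, Q.eval (x : ℂ) * φ x = 0 := by
  have hk : ∀ k ∈ Finset.range (Q.natDegree + 1), (k : ℝ) < α := fun k hk =>
    lt_of_le_of_lt (by exact_mod_cast Nat.lt_succ_iff.1 (Finset.mem_range.1 hk)) hQ
  simp only [eval_eq_sum_range, Finset.sum_mul, mul_assoc]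
  rw [integral_finsetSum _ fun k hk' =>
    (integrable_pow_mul_of_norm_le hφm hφ (hk k hk')).const_mul _]
  exact Finset.sum_eq_zero fun k hk' => by rw [integral_const_mul, hmom k (hk k hk'), mul_zero]

/-- The moment-cancellation estimate: only the distance from `g` to a polynomial of degree `< α`
is seen by `φ`. -/
lemma norm_integral_mul_le_of_norm_sub_eval_le (hφm : AEStronglyMeasurable φ)
    (hφ : ∀ x, ‖φ x‖ ≤ C * (1 + |x|) ^ (-α - 1))
    (hmom : ∀ k : ℕ, (k : ℝ) < α → ∫ x : ℝ, (x : ℂ) ^ k * φ x = 0)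
    {g : ℝ → ℂ} (hg : AEStronglyMeasurable g) (Q : ℂ[X]) (hQ : (Q.natDegree : ℝ) < α)
    {β A B : ℝ} (hβ : 0 ≤ β) (hβα : β < α)
    (hgQ : ∀ x, ‖g x - Q.eval (x : ℂ)‖ ≤ A * |x| ^ β + B) :
    ‖∫ x, g x * φ x‖ ≤
      C * (A * (∫ x : ℝ, |x| ^ β * (1 + |x|) ^ (-α - 1)) +
        B * ∫ x : ℝ, (1 + |x|) ^ (-α - 1)) := by
  have hw₁ : Integrable fun x : ℝ => |x| ^ β * (1 + |x|) ^ (-α - 1) := by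
    simpa only [neg_add'] using
      integrable_abs_rpow_mul_one_add_abs_rpow (r := α + 1) hβ (by linarith)
  have hw₀ : Integrable fun x : ℝ => (1 + |x|) ^ (-α - 1) := by
    simpa only [pow_zero, abs_zero, rpow_zero, one_mul, neg_add'] using
      integrable_abs_rpow_mul_one_add_abs_rpow (s := 0) (r := α + 1) le_rfl (by linarith)
  have hbound : Integrable fun x : ℝ =>
      C * (A * (|x| ^ β * (1 + |x|) ^ (-α - 1)) + B * (1 + |x|) ^ (-α - 1)) :=
    ((hw₁.const_mul A).add (hw₀.const_mul B)).const_mul C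
  have hpt : ∀ x : ℝ, ‖(g x - Q.eval (x : ℂ)) * φ x‖ ≤
      C * (A * (|x| ^ β * (1 + |x|) ^ (-α - 1)) + B * (1 + |x|) ^ (-α - 1)) := fun x => by
    rw [norm_mul]
    calc ‖g x - Q.eval (x : ℂ)‖ * ‖φ x‖
          ≤ (A * |x| ^ β + B) * (C * (1 + |x|) ^ (-α - 1)) :=
            mul_le_mul (hgQ x) (hφ x) (norm_nonneg _) ((norm_nonneg _).trans (hgQ x))
      _ = _ := by ring
  have hQφ := integrable_eval_mul_of_norm_le hφm hφ Q hQ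
  have hrem : Integrable fun x : ℝ => (g x - Q.eval (x : ℂ)) * φ x :=
    hbound.mono' ((hg.sub (by fun_prop)).mul hφm) (ae_of_all _ hpt)
  have hcancel : ∫ x, g x * φ x = ∫ x, (g x - Q.eval (x : ℂ)) * φ x := by
    rw [← add_zero (∫ x, (g x - Q.eval (x : ℂ)) * φ x),
      ← integral_eval_mul_eq_zero hφm hφ hmom Q hQ, ← integral_add hrem hQφ]
    simp only [sub_mul, sub_add_cancel]
  rw [hcancel]
  refine (norm_integral_le_of_norm_le hbound (ae_of_all _ hpt)).trans_eq ?_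
  rw [integral_const_mul, integral_add (hw₁.const_mul A) (hw₀.const_mul B), integral_const_mul,
    integral_const_mul]

end VanishingMoments

theorem stmt4_general (α β : ℝ) (hβ0 : 0 < β) (hβα : β < α)
    (f ψ : ℝ → ℂ) (hfc : Continuous f)
    (hψm : Measurable ψ)
    (hψdecay : ∃ C > (0:ℝ), ∀ x : ℝ, ‖ψ x‖ ≤ C * (1 + |x|) ^ (-α - 1))
    (hψmom : ∀ k : ℕ, (k : ℝ) < α → (∫ x : ℝ, (x : ℂ) ^ k * ψ x) = 0)
    (x₀ : ℝ)
    -- f ∈ C^β(x₀), globally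
    (hHol : ∃ P : Polynomial ℂ, (∀ k : ℕ, β ≤ (k : ℝ) → P.coeff k = 0) ∧
      ∃ C > (0:ℝ), ∀ x : ℝ, ‖f x - P.eval ((x - x₀ : ℝ) : ℂ)‖ ≤ C * |x - x₀| ^ β) :
    ∃ C > (0:ℝ), ∃ δ > (0:ℝ), ∀ a b : ℝ, 0 < a → a < δ → |b - x₀| < δ →
      ‖(a : ℂ)⁻¹ * ∫ t : ℝ, f t * (starRingEnd ℂ) (ψ ((t - b) / a))‖
        ≤ C * (a ^ β + |b - x₀| ^ β) := by
  obtain ⟨Cψ, hCψ, hψ⟩ := hψdecay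
  obtain ⟨P, hPcoeff, CH, hCH, hfP⟩ := hHol
  have hφm : AEStronglyMeasurable fun x => (starRingEnd ℂ) (ψ x) := by fun_prop
  have hφ : ∀ x, ‖(starRingEnd ℂ) (ψ x)‖ ≤ Cψ * (1 + |x|) ^ (-α - 1) := by
    simpa only [RCLike.norm_conj] using hψ
  have hφmom : ∀ k : ℕ, (k : ℝ) < α →
      ∫ x : ℝ, (x : ℂ) ^ k * (starRingEnd ℂ) (ψ x) = 0 := fun k hk => by
    simpa only [← integral_conj, map_mul, map_pow, conj_ofReal, map_zero] using
      congrArg (starRingEnd ℂ) (hψmom k hk)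
  have hPdeg := (natDegree_lt_of_coeff_eq_zero hβ0 hPcoeff).trans hβα
  set I₁ := ∫ x : ℝ, |x| ^ β * (1 + |x|) ^ (-α - 1)
  set I₀ := ∫ x : ℝ, (1 + |x|) ^ (-α - 1)
  have hI₁ : 0 ≤ I₁ := integral_nonneg fun x => by positivity
  have hI₀ : 0 ≤ I₀ := integral_nonneg fun x => by positivity
  refine ⟨Cψ * CH * 2 ^ β * (I₁ + I₀) + 1, by positivity, 1, one_pos,
    fun a b ha _ _ => ?_⟩
  set Q := P.comp (C (a : ℂ) * X + C ((b - x₀ : ℝ) : ℂ))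
  have hQdeg : (Q.natDegree : ℝ) < α :=
    lt_of_le_of_lt (by exact_mod_cast natDegree_comp_C_mul_X_add_C_le P _ _) hPdeg
  rw [integral_comp_sub_div_eq_integral_comp_mul_add ha b f fun x => (starRingEnd ℂ) (ψ x)]
  have ha' : 0 ≤ a ^ β := rpow_nonneg ha.le β
  have hc' : 0 ≤ |b - x₀| ^ β := rpow_nonneg (abs_nonneg _) β
  calc _ ≤ Cψ * (CH * 2 ^ β * a ^ β * I₁ + CH * 2 ^ β * |b - x₀| ^ β * I₀) :=
        norm_integral_mul_le_of_norm_sub_eval_le hφm hφ hφmom (by fun_prop) Q hQdeg hβ0.le hβα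
          (norm_sub_eval_comp_affine_le hβ0.le hCH.le hfP ha.le b)
    _ ≤ Cψ * CH * 2 ^ β * ((I₁ + I₀) * (a ^ β + |b - x₀| ^ β)) := by
        have : 0 ≤ Cψ * CH * 2 ^ β := by positivity
        nlinarith [mul_nonneg this (mul_nonneg ha' hI₀), mul_nonneg this (mul_nonneg hc' hI₁)]
    _ ≤ (Cψ * CH * 2 ^ β * (I₁ + I₀) + 1) * (a ^ β + |b - x₀| ^ β) := by nlinarith

theorem stmt4 (α β : ℝ) (hβ0 : 0 < β) (hβα : β < α)
    (f ψ : ℝ → ℂ) (hfc : Continuous f) (hfb : ∃ M : ℝ, ∀ x, ‖f x‖ ≤ M)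
    (hψm : Measurable ψ)
    (hψdecay : ∃ C > (0:ℝ), ∀ x : ℝ, ‖ψ x‖ ≤ C * (1 + |x|) ^ (-α - 1))
    (hψmom : ∀ k : ℕ, (k : ℝ) < α → (∫ x : ℝ, (x : ℂ) ^ k * ψ x) = 0)
    (x₀ : ℝ)
    -- f ∈ C^β(x₀), globally
    (hHol : ∃ P : Polynomial ℂ, (∀ k : ℕ, β ≤ (k : ℝ) → P.coeff k = 0) ∧
      ∃ C > (0:ℝ), ∀ x : ℝ, ‖f x - P.eval ((x - x₀ : ℝ) : ℂ)‖ ≤ C * |x - x₀| ^ β) :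
    ∃ C > (0:ℝ), ∃ δ > (0:ℝ), ∀ a b : ℝ, 0 < a → a < δ → |b - x₀| < δ →
      ‖(a : ℂ)⁻¹ * ∫ t : ℝ, f t * (starRingEnd ℂ) (ψ ((t - b) / a))‖
        ≤ C * (a ^ β + |b - x₀| ^ β) :=
  stmt4_general α β hβ0 hβα f ψ hfc hψm hψdecay hψmom x₀ hHol
end

section
/- (Jarník–Besicovitch for an invariant class, dilation step) Let Γ be a subgroup of SL₂(ℤ) that is normal in SL₂(ℤ), and let τ ≥ 2. For a cusp a, define A_τ^a as the set of real x such that |x − p/q| ≪ 1/q^τ for infinitely many rationals p/q that are Γ-equivalent to a. Then for every γ ∈ SL₂(ℤ), one has γ(A_τ^a ∩ D_γ) = A_τ^{γ(a)} ∩ γ(D_γ), where D_γ is the complement of the pole of γ; in particular γ maps irrational points of A_τ^a to points of A_τ^{γ(a)}. -/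
open Matrix

local notation "SL2Z" => Matrix.SpecialLinearGroup (Fin 2) ℤ

/-- Möbius action of `SL₂(ℤ)` on `ℚ ∪ {∞}` (with `none = ∞`). -/
noncomputable def mobQ (γ : SL2Z) : Option ℚ → Option ℚ
  | none => if (γ.1 1 0 : ℚ) = 0 then none else some ((γ.1 0 0 : ℚ) / (γ.1 1 0 : ℚ))
  | some x => if (γ.1 1 0 : ℚ) * x + (γ.1 1 1 : ℚ) = 0 then none
      else some (((γ.1 0 0 : ℚ) * x + (γ.1 0 1 : ℚ)) / ((γ.1 1 0 : ℚ) * x + (γ.1 1 1 : ℚ)))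

/-- Möbius action of `γ ∈ SL₂(ℤ)` on `ℝ` (away from the pole). -/
noncomputable def mobR (γ : SL2Z) (x : ℝ) : ℝ :=
  ((γ.1 0 0 : ℝ) * x + (γ.1 0 1 : ℝ)) / ((γ.1 1 0 : ℝ) * x + (γ.1 1 1 : ℝ))

/-- The complement of the pole of `γ` in `ℝ`. -/
def Dgamma (γ : SL2Z) : Set ℝ := {x : ℝ | (γ.1 1 0 : ℝ) * x + (γ.1 1 1 : ℝ) ≠ 0}

/-- The set `A_τ^a` of reals approximable to order `τ` by rationals `Γ`-equivalent
to the cusp `a ∈ ℚ ∪ {∞}`. -/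
def Atau (Γ : Subgroup SL2Z) (τ : ℝ) (a : Option ℚ) : Set ℝ :=
  {x : ℝ | ∃ C > (0:ℝ),
    {r : ℚ | (∃ γ ∈ Γ, mobQ γ (some r) = a) ∧ |x - (r : ℝ)| ≤ C / (r.den : ℝ) ^ τ}.Infinite}

/-!
If `|x - r| ≤ C / r.den ^ τ` for infinitely many `r`, then (as `τ > 0`) all but finitely many of
these `r` lie in a neighbourhood of `x` on which `|c y + d|` stays between `U / 2` and `2 U`, where
`U = |c x + d|`. For those `r` the denominator of `γ r` is at most `2 U r.den`, and
`γ x - γ r = (x - r) / ((c x + d) (c r + d))`, so `γ r` approximates `γ x` to order `τ` with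
constant `C (2 U) ^ τ / (U / 2) ^ 2`. Since `Γ` is normal, `γ δ γ⁻¹ ∈ Γ` carries `γ r` to `γ a`,
and `γ` is injective, so infinitely many approximants survive. The reverse inclusion is the same
statement for `γ⁻¹`.
-/

open scoped OnePoint
open Matrix.SpecialLinearGroup Set

lemma mapGL_smul_coe {K : Type*} [Field K] [DecidableEq K] (γ : SL2Z) (x : K) :
    mapGL K γ • (x : OnePoint K) =
      if (γ.1 1 0 : K) * x + γ.1 1 1 = 0 then ∞
      else ↑(((γ.1 0 0 : K) * x + γ.1 0 1) / ((γ.1 1 0 : K) * x + γ.1 1 1)) := by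
  simp [OnePoint.smul_some_eq_ite]

-- `OnePoint ℚ` is by definition `Option ℚ`, so `mobQ γ` is the `GL₂(ℚ)`-action on `ℙ¹(ℚ)`.
lemma mobQ_eq_smul (γ : SL2Z) (o : OnePoint ℚ) : mobQ γ o = mapGL ℚ γ • o := by
  cases o with
  | infty => simp [mobQ, OnePoint.smul_infty_eq_ite]; rfl
  | coe r => simp only [mobQ, mapGL_smul_coe]; rfl

lemma mobQ_mul (γ δ : SL2Z) (o : Option ℚ) : mobQ (γ * δ) o = mobQ γ (mobQ δ o) := by
  -- the action lemmas only rewrite at type `OnePoint ℚ`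
  have h (o : OnePoint ℚ) : mobQ (γ * δ) o = mobQ γ (mobQ δ o) := by
    rw [mobQ_eq_smul, mobQ_eq_smul, mobQ_eq_smul, map_mul, mul_smul]
  exact h o

lemma mobQ_inv_mobQ (γ : SL2Z) (o : Option ℚ) : mobQ γ⁻¹ (mobQ γ o) = o := by
  have h (o : OnePoint ℚ) : mobQ γ⁻¹ (mobQ γ o) = o := by
    rw [mobQ_eq_smul, mobQ_eq_smul, map_inv, inv_smul_smul]
  exact h o

lemma exists_mobQ_eq_mobQ_of_normal {Γ : Subgroup SL2Z} (hΓ : Γ.Normal) (γ : SL2Z)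
    {o a : Option ℚ} (h : ∃ δ ∈ Γ, mobQ δ o = a) : ∃ δ ∈ Γ, mobQ δ (mobQ γ o) = mobQ γ a := by
  obtain ⟨δ, hδ, rfl⟩ := h
  refine ⟨γ * δ * γ⁻¹, hΓ.conj_mem δ hδ γ, ?_⟩
  rw [mobQ_mul, mobQ_mul, mobQ_inv_mobQ]

lemma mobR_eq_smul {γ : SL2Z} {x : ℝ} (hx : x ∈ Dgamma γ) :
    mapGL ℝ γ • (x : OnePoint ℝ) = mobR γ x := by
  rw [mapGL_smul_coe, if_neg hx, mobR]

lemma mobR_inv_mobR {γ : SL2Z} {x : ℝ} (hx : x ∈ Dgamma γ) :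
    mobR γ x ∈ Dgamma γ⁻¹ ∧ mobR γ⁻¹ (mobR γ x) = x := by
  have h : (x : OnePoint ℝ) = mapGL ℝ γ⁻¹ • (mobR γ x : OnePoint ℝ) := by
    rw [← mobR_eq_smul hx, map_inv, inv_smul_smul]
  rw [mapGL_smul_coe] at h
  split_ifs at h with hpole
  · exact (OnePoint.coe_ne_infty x h).elim
  · exact ⟨hpole, (OnePoint.coe_injective h).symm⟩

lemma mobR_sub_mobR {γ : SL2Z} {x y : ℝ} (hx : x ∈ Dgamma γ) (hy : y ∈ Dgamma γ) :
    mobR γ x - mobR γ y =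
      (x - y) / (((γ.1 1 0 : ℝ) * x + γ.1 1 1) * ((γ.1 1 0 : ℝ) * y + γ.1 1 1)) := by
  have hdet : (γ.1 0 0 : ℝ) * γ.1 1 1 - γ.1 0 1 * γ.1 1 0 = 1 := by
    have h := γ.2
    rw [Matrix.det_fin_two] at h
    exact_mod_cast h
  rw [mobR, mobR, div_sub_div _ _ hx hy]
  congr 1
  linear_combination (x - y) * hdet

/-- `γ` acting on a rational number, with the junk value `0` at its pole. -/
noncomputable def mobRat (γ : SL2Z) (r : ℚ) : ℚ :=
  ((γ.1 0 0 : ℚ) * r + γ.1 0 1) / ((γ.1 1 0 : ℚ) * r + γ.1 1 1)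

@[simp, norm_cast]
lemma cast_mobRat (γ : SL2Z) (r : ℚ) : ((mobRat γ r : ℚ) : ℝ) = mobR γ r := by
  simp [mobRat, mobR]

lemma ratCast_mem_Dgamma_iff {γ : SL2Z} {r : ℚ} :
    (r : ℝ) ∈ Dgamma γ ↔ (γ.1 1 0 : ℚ) * r + γ.1 1 1 ≠ 0 := by
  simp only [Dgamma, mem_ofPred_eq]
  norm_cast

lemma mobQ_some_of_mem {γ : SL2Z} {r : ℚ} (hr : (r : ℝ) ∈ Dgamma γ) :
    mobQ γ (some r) = some (mobRat γ r) := by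
  simp [mobQ, ratCast_mem_Dgamma_iff.1 hr, mobRat]

lemma mobRat_injOn (γ : SL2Z) : InjOn (mobRat γ) {r : ℚ | (r : ℝ) ∈ Dgamma γ} := by
  intro r hr s hs h
  have hγ : mobQ γ (some r) = mobQ γ (some s) := by
    rw [mobQ_some_of_mem hr, mobQ_some_of_mem hs, h]
  simpa only [mobQ_inv_mobQ, Option.some_inj] using congrArg (mobQ γ⁻¹) hγ

lemma Rat.den_div_intCast_le (m n : ℤ) (hn : n ≠ 0) : (((m : ℚ) / n).den : ℤ) ≤ |n| :=
  Int.le_of_dvd (abs_pos.2 hn) ((dvd_abs _ _).2 (Rat.divInt_eq_div m n ▸ Rat.den_dvd m n))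

lemma Rat.den_linearFractional_le {A B C D : ℤ} {r : ℚ} (h : C * r + D ≠ 0) :
    (((A * r + B) / (C * r + D) : ℚ).den : ℚ) ≤ r.den * |C * r + D| := by
  have hq : (r.den : ℚ) ≠ 0 := by exact_mod_cast r.den_nz
  have clear_den : ∀ E F : ℤ, ((E * r.num + F * r.den : ℤ) : ℚ) = r.den * (E * r + F) := by
    intro E F
    push_cast
    rw [← Rat.mul_den_eq_num]
    ring
  have hCD : (C * r.num + D * r.den : ℤ) ≠ 0 := by
    rw [← Int.cast_ne_zero (α := ℚ), clear_den]
    exact mul_ne_zero hq h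
  have e : (A * r + B) / (C * r + D) =
      ((A * r.num + B * r.den : ℤ) : ℚ) / ((C * r.num + D * r.den : ℤ) : ℚ) := by
    rw [clear_den, clear_den, mul_div_mul_left _ _ hq]
  rw [e]
  calc _ ≤ |((C * r.num + D * r.den : ℤ) : ℚ)| := by
        exact_mod_cast Rat.den_div_intCast_le _ _ hCD
    _ = r.den * |C * r + D| := by rw [clear_den, abs_mul, Nat.abs_cast]

lemma den_mobRat_le {γ : SL2Z} {r : ℚ} (hr : (r : ℝ) ∈ Dgamma γ) :
    ((mobRat γ r).den : ℝ) ≤ r.den * |(γ.1 1 0 : ℝ) * r + γ.1 1 1| := by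
  exact_mod_cast Rat.den_linearFractional_le (A := γ.1 0 0) (B := γ.1 0 1)
    (ratCast_mem_Dgamma_iff.1 hr)

lemma Rat.finite_setOf_abs_le_den_le (R : ℝ) (N : ℕ) :
    {r : ℚ | |(r : ℝ)| ≤ R ∧ r.den ≤ N}.Finite := by
  set K : ℤ := ⌈R * N⌉
  refine Finite.of_finite_image (f := fun r : ℚ ↦ (r.num, r.den))
    (((finite_Icc (-K) K).prod (finite_Iic N)).subset ?_)
    (fun r _ s _ h ↦ Rat.ext (congrArg Prod.fst h) (congrArg Prod.snd h))
  rintro _ ⟨r, ⟨hr, hden⟩, rfl⟩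
  have hnum : |(r.num : ℝ)| ≤ R * N := by
    rw [← Rat.cast_intCast, ← Rat.mul_den_eq_num, Rat.cast_mul, abs_mul, Rat.cast_natCast,
      Nat.abs_cast]
    exact mul_le_mul hr (by exact_mod_cast hden) (Nat.cast_nonneg _) ((abs_nonneg _).trans hr)
  have hK : |r.num| ≤ K := by exact_mod_cast hnum.trans (Int.le_ceil _)
  exact ⟨abs_le.1 hK, hden⟩

lemma finite_setOf_approx_le_abs_sub (x C : ℝ) {τ ε : ℝ} (hτ : 0 < τ) (hε : 0 < ε) :
    {r : ℚ | |x - r| ≤ C / (r.den : ℝ) ^ τ ∧ ε ≤ |x - r|}.Finite := by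
  refine (Rat.finite_setOf_abs_le_den_le (|x| + C) ⌊(C / ε) ^ τ⁻¹⌋₊).subset ?_
  rintro r ⟨happ, hfar⟩
  have hden : (1 : ℝ) ≤ (r.den : ℝ) ^ τ := Real.one_le_rpow (by exact_mod_cast r.pos) hτ.le
  have hfar' : ε ≤ C / (r.den : ℝ) ^ τ := hfar.trans happ
  have hC : 0 ≤ C := by
    by_contra! hneg
    linarith [div_neg_of_neg_of_pos hneg (by positivity : (0 : ℝ) < (r.den : ℝ) ^ τ)]
  refine ⟨?_, Nat.le_floor ?_⟩
  · have hxr : |x - r| ≤ C := happ.trans (div_le_self hC hden)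
    have := abs_sub_abs_le_abs_sub (r : ℝ) x
    rw [abs_sub_comm] at this
    linarith
  · rw [Real.le_rpow_inv_iff_of_pos (Nat.cast_nonneg _) (by positivity) hτ, le_div_iff₀ hε]
    rwa [le_div_iff₀ (by linarith), mul_comm] at hfar'

lemma infinite_setOf_approx_abs_sub_lt {P : ℚ → Prop} {x C τ ε : ℝ} (hτ : 0 < τ) (hε : 0 < ε)
    (h : {r : ℚ | P r ∧ |x - r| ≤ C / (r.den : ℝ) ^ τ}.Infinite) :
    {r : ℚ | (P r ∧ |x - r| ≤ C / (r.den : ℝ) ^ τ) ∧ |x - r| < ε}.Infinite :=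
  (h.sdiff (finite_setOf_approx_le_abs_sub x C hτ hε)).mono fun _ hr ↦
    ⟨hr.1, not_le.1 fun h' ↦ hr.2 ⟨hr.1.2, h'⟩⟩

lemma div_rpow_le_mul_rpow_div_rpow {C q q' K τ : ℝ} (hC : 0 ≤ C) (hτ : 0 ≤ τ) (hq : 0 < q)
    (hq' : 0 < q') (h : q' ≤ q * K) : C / q ^ τ ≤ C * K ^ τ / q' ^ τ := by
  have hK : 0 < K := pos_of_mul_pos_right (hq'.trans_le h) hq.le
  calc C / q ^ τ = C * K ^ τ / (q * K) ^ τ := by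
        rw [Real.mul_rpow hq.le hK.le]
        field_simp
    _ ≤ C * K ^ τ / q' ^ τ := by
        gcongr

lemma abs_mobR_sub_mobRat_le {γ : SL2Z} {x : ℝ} {r : ℚ} {C τ m M : ℝ} (hC : 0 ≤ C) (hτ : 0 ≤ τ)
    (hm : 0 < m) (hx : m ≤ |(γ.1 1 0 : ℝ) * x + γ.1 1 1|)
    (hr : m ≤ |(γ.1 1 0 : ℝ) * r + γ.1 1 1|) (hrM : |(γ.1 1 0 : ℝ) * r + γ.1 1 1| ≤ M)
    (happ : |x - r| ≤ C / (r.den : ℝ) ^ τ) :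
    |mobR γ x - mobRat γ r| ≤ C * M ^ τ / m ^ 2 / ((mobRat γ r).den : ℝ) ^ τ := by
  have hxD : x ∈ Dgamma γ := abs_pos.1 (hm.trans_le hx)
  have hrD : (r : ℝ) ∈ Dgamma γ := abs_pos.1 (hm.trans_le hr)
  rw [cast_mobRat, mobR_sub_mobR hxD hrD, abs_div, abs_mul]
  calc |x - r| / (|(γ.1 1 0 : ℝ) * x + γ.1 1 1| * |(γ.1 1 0 : ℝ) * r + γ.1 1 1|)
      ≤ C / (r.den : ℝ) ^ τ / (m * m) := by gcongr
    _ = C / m ^ 2 / (r.den : ℝ) ^ τ := by ring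
    _ ≤ C / m ^ 2 * M ^ τ / ((mobRat γ r).den : ℝ) ^ τ :=
        div_rpow_le_mul_rpow_div_rpow (by positivity) hτ (by exact_mod_cast r.pos)
          (by exact_mod_cast (mobRat γ r).pos) ((den_mobRat_le hrD).trans (by gcongr))
    _ = C * M ^ τ / m ^ 2 / ((mobRat γ r).den : ℝ) ^ τ := by ring

theorem mobR_mem_Atau {Γ : Subgroup SL2Z} (hΓ : Γ.Normal) {τ : ℝ} (hτ : 0 < τ) {a : Option ℚ}
    {γ : SL2Z} {x : ℝ} (hxD : x ∈ Dgamma γ) (hx : x ∈ Atau Γ τ a) :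
    mobR γ x ∈ Atau Γ τ (mobQ γ a) := by
  obtain ⟨C, hC, hS⟩ := hx
  set U := |(γ.1 1 0 : ℝ) * x + γ.1 1 1|
  have hU : 0 < U := abs_pos.2 hxD
  obtain ⟨ε, hε, hnear⟩ : ∃ ε > 0, ∀ ⦃y : ℝ⦄, dist y x < ε →
      |(γ.1 1 0 : ℝ) * y + γ.1 1 1| ∈ Ioo (U / 2) (2 * U) :=
    Metric.eventually_nhds_iff.1 <| (by fun_prop : Continuous fun y : ℝ ↦
      |(γ.1 1 0 : ℝ) * y + γ.1 1 1|).continuousAt.eventually_mem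
        (Ioo_mem_nhds (by linarith) (by linarith))
  set S := {r : ℚ | ((∃ δ ∈ Γ, mobQ δ (some r) = a) ∧ |x - r| ≤ C / (r.den : ℝ) ^ τ) ∧
    |x - r| < ε}
  have hS' : S.Infinite := infinite_setOf_approx_abs_sub_lt hτ hε hS
  have hpole : ∀ r ∈ S, |(γ.1 1 0 : ℝ) * r + γ.1 1 1| ∈ Ioo (U / 2) (2 * U) := fun r hr ↦
    hnear (by rw [Real.dist_eq, abs_sub_comm]; exact hr.2)
  have hD : ∀ r ∈ S, (r : ℝ) ∈ Dgamma γ := fun r hr ↦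
    abs_pos.1 ((half_pos hU).trans (hpole r hr).1)
  refine ⟨C * (2 * U) ^ τ / (U / 2) ^ 2, by positivity,
    infinite_of_injOn_mapsTo ((mobRat_injOn γ).mono hD) (fun r hr ↦ ⟨?_, ?_⟩) hS'⟩
  · rw [← mobQ_some_of_mem (hD r hr)]
    exact exists_mobQ_eq_mobQ_of_normal hΓ γ hr.1.1
  · exact abs_mobR_sub_mobRat_le hC.le hτ.le (half_pos hU) (half_le_self hU.le)
      (hpole r hr).1.le (hpole r hr).2.le hr.1.2

theorem stmt6 (Γ : Subgroup SL2Z) (hΓ : Γ.Normal) (τ : ℝ) (hτ : 2 ≤ τ)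
    (a : Option ℚ) (γ : SL2Z) :
    mobR γ '' (Atau Γ τ a ∩ Dgamma γ) = Atau Γ τ (mobQ γ a) ∩ (mobR γ '' Dgamma γ) := by
  have hτ₀ : 0 < τ := by linarith
  ext y
  constructor
  · rintro ⟨x, ⟨hxA, hxD⟩, rfl⟩
    exact ⟨mobR_mem_Atau hΓ hτ₀ hxD hxA, x, hxD, rfl⟩
  · rintro ⟨hyA, x, hxD, rfl⟩
    obtain ⟨hyD, hinv⟩ := mobR_inv_mobR hxD
    refine ⟨x, ⟨?_, hxD⟩, rfl⟩
    have := mobR_mem_Atau hΓ hτ₀ hyD hyA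
    rwa [hinv, mobQ_inv_mobQ] at this
end
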